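/- Let G be a looped graph with n vertices, m edges and c loops with m + c = 2n. Then the determinant of the square matrix M_{2,0,2}(G) is nonzero as a polynomial in the indeterminates a_e, b_e, c_l, d_l if and only if the edges and loops of G can be partitioned into two disjoint sets, each of which (together with the full vertex set V) forms a spanning looped forest of G, i.e. each set consists of n edges plus loops whose edges form a forest on V in which every connected component contains exactly one loop of that set. -/

import Mathlib

/-!
STATEMENT 11: det M_{2,0,2}(G) ≠ 0 iff G decomposes into two spanning looped forests.
Let G be a looped graph with n vertices, m edges and c loops with m + c = 2n.  Then the
determinant of the square matrix M_{2,0,2}(G) is nonzero as a polynomial in a_e, b_e,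
c_l, d_l iff the edges and loops of G can be partitioned into two disjoint sets, each of
which forms a spanning looped forest of G.
-/

open MvPolynomial

/-- A looped graph. -/
structure LGraph (V E L : Type) where
  ends : E → V × V
  ne : ∀ e, (ends e).1 ≠ (ends e).2
  loopAt : L → V

namespace LGraph

variable {V E L : Type}

/-- The simple graph on `V` underlying the edges of `G` satisfying `P`. -/
def subSG (G : LGraph V E L) (P : E → Prop) : SimpleGraph V :=
  SimpleGraph.fromRel fun u v => ∃ e, P e ∧ G.ends e = (u, v)

/-- The edges satisfying `P` and the loops satisfying `Q` form a spanning looped forest: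
the selected edges are distinct as unordered pairs and acyclic on `V`, and every
connected component of the resulting forest (isolated vertices included) carries exactly
one selected loop. -/
def IsLoopedForestOn (G : LGraph V E L) (P : E → Prop) (Q : L → Prop) : Prop :=
  (∀ e f, P e → P f →
      s((G.ends e).1, (G.ends e).2) = s((G.ends f).1, (G.ends f).2) → e = f) ∧
  (G.subSG P).IsAcyclic ∧
  ∀ comp : (G.subSG P).ConnectedComponent,
    Nat.card {l : L // Q l ∧ (G.subSG P).connectedComponentMk (G.loopAt l) = comp} = 1

/-- The matrix `M_{2,0,2}(G)` over the polynomial ring `ℝ[a_e, b_e, c_l, d_l]`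
(`Sum.inl (Sum.inl e)` is `a_e`, `Sum.inl (Sum.inr e)` is `b_e`, `Sum.inr (Sum.inl l)`
is `c_l`, `Sum.inr (Sum.inr l)` is `d_l`). -/
noncomputable def M202 [DecidableEq V] (G : LGraph V E L) :
    Matrix (E ⊕ L) (V ⊕ V) (MvPolynomial ((E ⊕ E) ⊕ (L ⊕ L)) ℝ) := fun row col =>
  match row with
  | Sum.inl e =>
      match col with
      | Sum.inl v =>
          if v = (G.ends e).1 then X (Sum.inl (Sum.inl e))
          else if v = (G.ends e).2 then -X (Sum.inl (Sum.inl e)) else 0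
      | Sum.inr v =>
          if v = (G.ends e).1 then X (Sum.inl (Sum.inr e))
          else if v = (G.ends e).2 then -X (Sum.inl (Sum.inr e)) else 0
  | Sum.inr l =>
      match col with
      | Sum.inl v => if v = G.loopAt l then X (Sum.inr (Sum.inl l)) else 0
      | Sum.inr v => if v = G.loopAt l then X (Sum.inr (Sum.inr l)) else 0

end LGraph

/-!
Write `x_{i,false}, x_{i,true}` for the two variables of row `i` (`a_e, b_e` or `c_l, d_l`).
Expanding the determinant row by row, `det M_{2,0,2}(G) = ∑_χ (∏_i x_{i,χ i}) · det N_χ`, where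
`χ` colours every row (edge or loop) by the variable chosen from it and `N_χ` is the real
matrix in which a row of colour `b` is the signed incidence vector of that edge or loop, placed
in the `b`-th copy of `ℝ^V`. Distinct colourings give distinct monomials, so `det M ≠ 0` iff
some `N_χ` is nonsingular.

`N_χ` is nonsingular iff for each colour the only `z : V → ℝ` orthogonal to all incidence
vectors of that colour is `0`; these `z` are the functions that are constant on components of
the subgraph of that colour and vanish at its loops, so this says every component carries a loop.
Nonsingularity also makes the incidence vectors of each colour linearly independent, which
rules out parallel edges, cycles and two loops in one component: by telescoping along a walk,
each of them puts one incidence vector into the span of others.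
-/

open Matrix

theorem MvPolynomial.sum_monomial_eq_zero_iff {ι σ R : Type*} [CommRing R] [Fintype ι]
    {m : ι → σ →₀ ℕ} (hm : Function.Injective m) (c : ι → R) :
    ∑ i, monomial (m i) (c i) = 0 ↔ ∀ i, c i = 0 := by
  refine ⟨fun h => Fintype.linearIndependent_iff.1
    ((basisMonomials σ R).linearIndependent.comp m hm) c ?_, fun h => by simp [h]⟩
  simpa [smul_monomial] using h

theorem Matrix.det_submatrix_ne_zero_iff {m n K : Type*} [Field K] [Fintype m] [DecidableEq m]
    [Fintype n] (A : Matrix m n K) (e : m ≃ n) :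
    (A.submatrix id e).det ≠ 0 ↔ ∀ x, A *ᵥ x = 0 → x = 0 := by
  rw [Ne, ← exists_mulVec_eq_zero_iff, not_exists]
  refine ⟨fun h x hx => ?_, fun h y ⟨hy, hAy⟩ => hy ?_⟩
  · by_contra hx0
    refine h (x ∘ e) ⟨fun h0 => hx0 ?_, by simp [submatrix_mulVec_equiv, Function.comp_def, hx]⟩
    exact funext fun j => by simpa using congrFun h0 (e.symm j)
  · have := h (y ∘ e.symm) (by simpa [submatrix_mulVec_equiv] using hAy)
    exact funext fun i => by simpa using congrFun this (e i)

theorem LinearIndepOn.notMem_span_image_of_insert_subset {ι K M : Type*} [DivisionRing K]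
    [AddCommGroup M] [Module K M] {v : ι → M} {s t : Set ι} {a : ι} (hv : LinearIndepOn K v s)
    (ha : a ∉ t) (hts : insert a t ⊆ s) : v a ∉ Submodule.span K (v '' t) :=
  ((linearIndepOn_insert ha).1 (hv.mono hts)).2

theorem SimpleGraph.Reachable.eq_of_forall_adj {W β : Type*} {H : SimpleGraph W} {f : W → β}
    (hf : ∀ u v, H.Adj u v → f u = f v) {u v : W} (h : H.Reachable u v) : f u = f v := by
  obtain ⟨p⟩ := h
  induction p with
  | nil => rfl
  | cons ha _ ih => exact (hf _ _ ha).trans ih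

namespace LGraph

variable {V E L : Type}

def edge (G : LGraph V E L) (e : E) : Sym2 V := s((G.ends e).1, (G.ends e).2)

theorem subSG_adj (G : LGraph V E L) {P : E → Prop} {u v : V} :
    (G.subSG P).Adj u v ↔ ∃ e, P e ∧ G.edge e = s(u, v) := by
  simp only [subSG, SimpleGraph.fromRel_adj, edge]
  constructor
  · rintro ⟨-, ⟨e, he, h⟩ | ⟨e, he, h⟩⟩
    · exact ⟨e, he, by simp [h]⟩
    · exact ⟨e, he, by simp [h, Sym2.eq_swap]⟩
  · rintro ⟨e, he, h⟩
    have hne := G.ne e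
    rcases Sym2.eq_iff.1 h with ⟨h1, h2⟩ | ⟨h1, h2⟩
    · exact ⟨h1 ▸ h2 ▸ hne, Or.inl ⟨e, he, by rw [← h1, ← h2]⟩⟩
    · exact ⟨h2 ▸ h1 ▸ hne.symm, Or.inr ⟨e, he, by rw [← h1, ← h2]⟩⟩

section Incidence

variable [DecidableEq V] (G : LGraph V E L)

def incidenceVec : E ⊕ L → V → ℝ
  | .inl e => Pi.single (G.ends e).1 1 - Pi.single (G.ends e).2 1
  | .inr l => Pi.single (G.loopAt l) 1

theorem incidenceVec_inl_eq_or_eq_neg {e : E} {u v : V} (h : G.edge e = s(u, v)) :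
    G.incidenceVec (.inl e) = Pi.single u 1 - Pi.single v 1 ∨
      G.incidenceVec (.inl e) = -(Pi.single u 1 - Pi.single v 1) := by
  rcases Sym2.eq_iff.1 h with ⟨h1, h2⟩ | ⟨h1, h2⟩
  · exact .inl (by simp [incidenceVec, h1, h2])
  · exact .inr (by simp [incidenceVec, h1, h2])

theorem incidenceVec_inl_dotProduct [Fintype V] (e : E) (z : V → ℝ) :
    G.incidenceVec (.inl e) ⬝ᵥ z = z (G.ends e).1 - z (G.ends e).2 := by
  simp [incidenceVec, sub_dotProduct]

theorem incidenceVec_inr_dotProduct [Fintype V] (l : L) (z : V → ℝ) :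
    G.incidenceVec (.inr l) ⬝ᵥ z = z (G.loopAt l) := by
  simp [incidenceVec]

theorem single_sub_single_mem_span_of_walk {P : E → Prop} {u v : V} (p : (G.subSG P).Walk u v) :
    (Pi.single u 1 - Pi.single v 1 : V → ℝ) ∈
      Submodule.span ℝ (G.incidenceVec '' (Sum.inl '' {e | P e ∧ G.edge e ∈ p.edges})) := by
  induction p with
  | nil => simp
  | @cons u w v hadj p ih =>
    obtain ⟨e, he, hedge⟩ := G.subSG_adj.1 hadj
    rw [← sub_add_sub_cancel _ (Pi.single w 1)]
    refine add_mem ?_ (Submodule.span_mono (Set.image_mono (Set.image_mono ?_)) ih)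
    · have hmem : G.incidenceVec (.inl e) ∈ Submodule.span ℝ
          (G.incidenceVec '' (Sum.inl '' {e | P e ∧ G.edge e ∈ (p.cons hadj).edges})) :=
        Submodule.subset_span ⟨.inl e, ⟨e, ⟨he, by simp [hedge]⟩, rfl⟩, rfl⟩
      rcases G.incidenceVec_inl_eq_or_eq_neg hedge with h | h <;> rw [h] at hmem
      · exact hmem
      · simpa using neg_mem hmem
    · rintro f ⟨hf, hfp⟩
      exact ⟨hf, by simp [hfp]⟩

variable (S : Set (E ⊕ L))

theorem eq_of_edge_eq_of_linearIndepOn (hS : LinearIndepOn ℝ G.incidenceVec S) {e f : E}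
    (he : .inl e ∈ S) (hf : .inl f ∈ S) (h : G.edge e = G.edge f) : e = f := by
  by_contra hne
  refine hS.notMem_span_image_of_insert_subset (a := .inl e) (t := {.inl f}) (by simpa using hne)
    (by simp [Set.insert_subset_iff, he, hf]) ?_
  rw [Set.image_singleton, Submodule.mem_span_singleton]
  rcases G.incidenceVec_inl_eq_or_eq_neg h.symm with h' | h'
  · exact ⟨1, by rw [h', one_smul]; rfl⟩
  · exact ⟨-1, by rw [h', neg_one_smul, neg_neg]; rfl⟩

theorem isAcyclic_of_linearIndepOn (hS : LinearIndepOn ℝ G.incidenceVec S) :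
    (G.subSG fun e => .inl e ∈ S).IsAcyclic := by
  rintro v (_ | @⟨_, u, _, hadj, p⟩) hc
  · exact SimpleGraph.Walk.not_isCycle_nil hc
  obtain ⟨e, he, hedge⟩ := G.subSG_adj.1 hadj
  have hnotin : G.edge e ∉ p.edges := by
    rw [hedge]
    exact (List.nodup_cons.1 (by simpa using hc.edges_nodup)).1
  refine hS.notMem_span_image_of_insert_subset (a := .inl e)
    (t := Sum.inl '' {f | .inl f ∈ S ∧ G.edge f ∈ p.edges}) ?_ ?_ ?_
  · rintro ⟨f, ⟨-, hf⟩, hfe⟩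
    exact hnotin (Sum.inl_injective hfe ▸ hf)
  · rintro _ (rfl | ⟨f, ⟨hf, -⟩, rfl⟩) <;> assumption
  · have hp := G.single_sub_single_mem_span_of_walk p
    rcases G.incidenceVec_inl_eq_or_eq_neg hedge with h | h <;> rw [h]
    · simpa using neg_mem hp
    · simpa using hp

theorem loop_eq_of_linearIndepOn (hS : LinearIndepOn ℝ G.incidenceVec S) {l₁ l₂ : L}
    (h₁ : .inr l₁ ∈ S) (h₂ : .inr l₂ ∈ S)
    (h : (G.subSG fun e => .inl e ∈ S).Reachable (G.loopAt l₁) (G.loopAt l₂)) : l₁ = l₂ := by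
  by_contra hne
  obtain ⟨p⟩ := h
  refine hS.notMem_span_image_of_insert_subset (a := .inr l₁)
    (t := insert (.inr l₂) (Sum.inl '' {f | .inl f ∈ S ∧ G.edge f ∈ p.edges})) (by simp [hne]) ?_ ?_
  · rintro _ (rfl | rfl | ⟨f, ⟨hf, -⟩, rfl⟩) <;> assumption
  · rw [Set.image_insert_eq]
    have hsplit : G.incidenceVec (.inr l₁) =
        (Pi.single (G.loopAt l₁) 1 - Pi.single (G.loopAt l₂) 1) + G.incidenceVec (.inr l₂) := by
      simp [incidenceVec]
    rw [hsplit]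
    exact add_mem (Submodule.span_mono (Set.subset_insert _ _)
      (G.single_sub_single_mem_span_of_walk p)) (Submodule.subset_span (Set.mem_insert _ _))

theorem exists_loop_of_forall_dotProduct_eq_zero [Fintype V]
    (hS : ∀ z : V → ℝ, (∀ i ∈ S, G.incidenceVec i ⬝ᵥ z = 0) → z = 0)
    (c : (G.subSG fun e => .inl e ∈ S).ConnectedComponent) :
    ∃ l, .inr l ∈ S ∧ (G.subSG fun e => .inl e ∈ S).connectedComponentMk (G.loopAt l) = c := by
  by_contra! hno
  have hc := hS (c.supp.indicator 1) ?_
  · obtain ⟨v, hv⟩ := c.nonempty_supp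
    simpa [hv] using congrFun hc v
  rintro (e | l) hi
  · have hadj := (G.subSG_adj (P := fun e => .inl e ∈ S)).2 ⟨e, hi, rfl⟩
    have hmem : (G.ends e).1 ∈ c.supp ↔ (G.ends e).2 ∈ c.supp := by
      simp only [SimpleGraph.ConnectedComponent.mem_supp_iff,
        SimpleGraph.ConnectedComponent.connectedComponentMk_eq_of_adj hadj]
    rw [incidenceVec_inl_dotProduct, sub_eq_zero]
    classical
    simp only [Set.indicator_apply, hmem, Pi.one_apply]
  · rw [incidenceVec_inr_dotProduct]
    exact Set.indicator_of_notMem (hno l hi) 1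

theorem isLoopedForestOn_of_linearIndepOn [Fintype V] (hI : LinearIndepOn ℝ G.incidenceVec S)
    (hA : ∀ z : V → ℝ, (∀ i ∈ S, G.incidenceVec i ⬝ᵥ z = 0) → z = 0) :
    G.IsLoopedForestOn (fun e => .inl e ∈ S) (fun l => .inr l ∈ S) := by
  refine ⟨fun e f he hf h => G.eq_of_edge_eq_of_linearIndepOn S hI he hf h,
    G.isAcyclic_of_linearIndepOn S hI, fun c => Nat.card_eq_one_iff_unique.2 ⟨⟨?_⟩, ?_⟩⟩
  · rintro ⟨l₁, h₁, hc₁⟩ ⟨l₂, h₂, hc₂⟩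
    exact Subtype.ext (G.loop_eq_of_linearIndepOn S hI h₁ h₂
      (SimpleGraph.ConnectedComponent.eq.1 (hc₁.trans hc₂.symm)))
  · obtain ⟨l, hl⟩ := G.exists_loop_of_forall_dotProduct_eq_zero S hA c
    exact ⟨⟨l, hl⟩⟩

theorem IsLoopedForestOn.eq_zero_of_forall_dotProduct_eq_zero [Fintype V]
    (hG : G.IsLoopedForestOn (fun e => .inl e ∈ S) (fun l => .inr l ∈ S)) {z : V → ℝ}
    (hz : ∀ i ∈ S, G.incidenceVec i ⬝ᵥ z = 0) : z = 0 := by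
  have hadj : ∀ u w, (G.subSG fun e => .inl e ∈ S).Adj u w → z u = z w := by
    intro u w h
    obtain ⟨e, he, hedge⟩ := G.subSG_adj.1 h
    have := hz _ he
    rw [incidenceVec_inl_dotProduct, sub_eq_zero] at this
    rcases Sym2.eq_iff.1 hedge with ⟨h1, h2⟩ | ⟨h1, h2⟩
    · rwa [← h1, ← h2]
    · rw [← h1, ← h2, this]
  funext v
  obtain ⟨⟨l, hl, hc⟩⟩ := (Nat.card_eq_one_iff_unique.1 (hG.2.2
    ((G.subSG fun e => .inl e ∈ S).connectedComponentMk v))).2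
  rw [← SimpleGraph.Reachable.eq_of_forall_adj hadj (SimpleGraph.ConnectedComponent.eq.1 hc),
    ← G.incidenceVec_inr_dotProduct l z, hz _ hl, Pi.zero_apply]

end Incidence

section ColoredIncidence

variable [DecidableEq V] (G : LGraph V E L)

def coloredIncidenceMatrix (χ : E ⊕ L → Bool) : Matrix (E ⊕ L) (Bool × V) ℝ :=
  fun i w => if w.1 = χ i then G.incidenceVec i w.2 else 0

theorem linearIndepOn_incidenceVec_of_det_ne_zero [Fintype E] [Fintype L] [DecidableEq E]
    [DecidableEq L] (χ : E ⊕ L → Bool) (e : E ⊕ L ≃ Bool × V)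
    (h : ((G.coloredIncidenceMatrix χ).submatrix id e).det ≠ 0) (b : Bool) :
    LinearIndepOn ℝ G.incidenceVec {i | χ i = b} := by
  let embedSide : (V → ℝ) →ₗ[ℝ] E ⊕ L → ℝ := LinearMap.pi fun j =>
    if (e j).1 = b then LinearMap.proj (e j).2 else 0
  refine LinearIndependent.of_comp embedSide ?_
  have hrows : embedSide ∘ (fun i : {i | χ i = b} => G.incidenceVec i) =
      fun i => (G.coloredIncidenceMatrix χ).submatrix id e i.1 := by
    ext ⟨i, hi⟩ j
    change χ i = b at hi
    by_cases hj : (e j).1 = b <;> simp [embedSide, coloredIncidenceMatrix, hj, hi]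
  rw [hrows]
  exact (linearIndependent_rows_of_det_ne_zero h).comp _ Subtype.val_injective

variable [Fintype V]

theorem coloredIncidenceMatrix_mulVec_apply (χ : E ⊕ L → Bool) (x : Bool × V → ℝ) (i : E ⊕ L) :
    (G.coloredIncidenceMatrix χ *ᵥ x) i = G.incidenceVec i ⬝ᵥ fun v => x (χ i, v) := by
  simp [mulVec, dotProduct, coloredIncidenceMatrix, Fintype.sum_prod_type]

variable [Fintype E] [Fintype L] [DecidableEq E] [DecidableEq L]

theorem det_coloredIncidenceMatrix_submatrix_ne_zero_iff (χ : E ⊕ L → Bool)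
    (e : E ⊕ L ≃ Bool × V) :
    ((G.coloredIncidenceMatrix χ).submatrix id e).det ≠ 0 ↔
      ∀ b (z : V → ℝ), (∀ i, χ i = b → G.incidenceVec i ⬝ᵥ z = 0) → z = 0 := by
  rw [det_submatrix_ne_zero_iff]
  constructor
  · intro h b z hz
    have := h (fun w => if w.1 = b then z w.2 else 0) (by
      ext i
      rw [coloredIncidenceMatrix_mulVec_apply]
      by_cases hi : χ i = b
      · simpa [hi] using hz i hi
      · simp [hi])
    ext v
    simpa using congrFun this (b, v)
  · intro h x hx
    ext ⟨b, v⟩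
    exact congrFun (h b _ fun i hi => by
      simpa [hi, coloredIncidenceMatrix_mulVec_apply] using congrFun hx i) v

theorem det_coloredIncidenceMatrix_submatrix_ne_zero_iff_isLoopedForestOn (χ : E ⊕ L → Bool)
    (e : E ⊕ L ≃ Bool × V) :
    ((G.coloredIncidenceMatrix χ).submatrix id e).det ≠ 0 ↔
      ∀ b, G.IsLoopedForestOn (fun e => χ (.inl e) = b) (fun l => χ (.inr l) = b) := by
  rw [det_coloredIncidenceMatrix_submatrix_ne_zero_iff]
  refine ⟨fun h b => ?_, fun h b z hz =>
    (h b).eq_zero_of_forall_dotProduct_eq_zero G {i | χ i = b} hz⟩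
  exact G.isLoopedForestOn_of_linearIndepOn {i | χ i = b}
    (G.linearIndepOn_incidenceVec_of_det_ne_zero χ e
      ((det_coloredIncidenceMatrix_submatrix_ne_zero_iff G χ e).2 h) b) (h b)

end ColoredIncidence

section Expansion

def rowVar : E ⊕ L → Bool → (E ⊕ E) ⊕ (L ⊕ L)
  | .inl e, false => .inl (.inl e)
  | .inl e, true => .inl (.inr e)
  | .inr l, false => .inr (.inl l)
  | .inr l, true => .inr (.inr l)

theorem rowVar_injective2 : Function.Injective2 (rowVar : E ⊕ L → Bool → _) := by
  rintro (e | l) (_ | _) (e' | l') (_ | _) h <;> simp_all [rowVar]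

theorem M202_apply_boolProdEquivSum [DecidableEq V] (G : LGraph V E L) (i : E ⊕ L) (b : Bool)
    (v : V) :
    G.M202 i (Equiv.boolProdEquivSum V (b, v)) = X (rowVar i b) * C (G.incidenceVec i v) := by
  rcases i with e | l <;> cases b <;>
    simp only [M202, incidenceVec, rowVar, Equiv.boolProdEquivSum_apply, Pi.sub_apply,
      Pi.single_apply] <;>
    split_ifs <;> simp_all [(G.ne _).symm]

variable [Fintype E] [Fintype L]

noncomputable def rowVarsExp (χ : E ⊕ L → Bool) : (E ⊕ E) ⊕ (L ⊕ L) →₀ ℕ :=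
  ∑ i, Finsupp.single (rowVar i (χ i)) 1

variable [DecidableEq E] [DecidableEq L]

theorem rowVarsExp_rowVar (χ : E ⊕ L → Bool) (i : E ⊕ L) (b : Bool) :
    rowVarsExp χ (rowVar i b) = if χ i = b then 1 else 0 := by
  simp only [rowVarsExp, Finsupp.finsetSum_apply, Finsupp.single_apply,
    rowVar_injective2.eq_iff, ite_and, Finset.sum_ite_eq', Finset.mem_univ, if_true]

theorem rowVarsExp_injective : Function.Injective (rowVarsExp : (E ⊕ L → Bool) → _) :=
  fun χ χ' h => funext fun i => by
    simpa [rowVarsExp_rowVar, eq_comm] using DFunLike.congr_fun h (rowVar i (χ i))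

theorem det_M202_submatrix [Fintype V] [DecidableEq V] (G : LGraph V E L)
    (eqv : E ⊕ L ≃ V ⊕ V) :
    (G.M202.submatrix id eqv).det = ∑ χ : E ⊕ L → Bool, monomial (rowVarsExp χ)
      ((G.coloredIncidenceMatrix χ).submatrix id
        (eqv.trans (Equiv.boolProdEquivSum V).symm)).det := by
  set e := eqv.trans (Equiv.boolProdEquivSum V).symm
  set g : E ⊕ L → Bool → E ⊕ L → MvPolynomial ((E ⊕ E) ⊕ (L ⊕ L)) ℝ :=
    fun i b j => X (rowVar i b) * C (G.coloredIncidenceMatrix (fun _ => b) i (e j))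
  have hrow : G.M202.submatrix id eqv = fun i => ∑ b, g i b := by
    ext i j
    obtain ⟨⟨c, v⟩, rfl⟩ := e.symm.surjective j
    have hcol : eqv (e.symm (c, v)) = Equiv.boolProdEquivSum V (c, v) := by simp [e]
    rw [submatrix_apply, hcol, M202_apply_boolProdEquivSum]
    cases c <;> simp [g, coloredIncidenceMatrix]
  rw [hrow]
  refine ((detRowAlternating (R := MvPolynomial _ ℝ)).map_sum g).trans
    (Finset.sum_congr rfl fun χ _ => ?_)
  calc detRowAlternating (fun i => g i (χ i))
      = det (of fun i j => X (rowVar i (χ i)) *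
          (C : ℝ →+* MvPolynomial ((E ⊕ E) ⊕ (L ⊕ L)) ℝ).mapMatrix
            ((G.coloredIncidenceMatrix χ).submatrix id e) i j) := rfl
    _ = (∏ i, X (rowVar i (χ i))) * C ((G.coloredIncidenceMatrix χ).submatrix id e).det := by
      rw [det_mul_column, RingHom.map_det]
    _ = _ := by rw [rowVarsExp, monomial_sum_index, mul_comm]; rfl

end Expansion

end LGraph

theorem det_M202_ne_zero_iff_two_spanning_looped_forests_general
    {V E L : Type} [Fintype V] [Fintype E] [Fintype L]
    [DecidableEq V] [DecidableEq E] [DecidableEq L]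
    (G : LGraph V E L)
    (eqv : E ⊕ L ≃ V ⊕ V) :
    ((LGraph.M202 G).submatrix id eqv).det ≠ 0 ↔
      ∃ (ecol : E → Bool) (lcol : L → Bool), ∀ b : Bool,
        G.IsLoopedForestOn (fun e => ecol e = b) (fun l => lcol l = b) := by
  rw [LGraph.det_M202_submatrix, Ne,
    MvPolynomial.sum_monomial_eq_zero_iff LGraph.rowVarsExp_injective, not_forall]
  constructor
  · rintro ⟨χ, h⟩
    exact ⟨fun e => χ (.inl e), fun l => χ (.inr l),
      (G.det_coloredIncidenceMatrix_submatrix_ne_zero_iff_isLoopedForestOn χ _).1 h⟩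
  · rintro ⟨ecol, lcol, h⟩
    exact ⟨Sum.elim ecol lcol,
      (G.det_coloredIncidenceMatrix_submatrix_ne_zero_iff_isLoopedForestOn _ _).2 h⟩

/-- **Nonvanishing of `det M_{2,0,2}(G)` characterizes decompositions into two spanning
looped forests.**  The square matrix is formed using an arbitrary bijection `eqv`
between rows and columns, which exists since `m + c = 2n`; the partition is encoded by
Boolean labellings `ecol` of the edges and `lcol` of the loops. -/
theorem det_M202_ne_zero_iff_two_spanning_looped_forests
    {V E L : Type} [Fintype V] [Fintype E] [Fintype L]
    [DecidableEq V] [DecidableEq E] [DecidableEq L]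
    (G : LGraph V E L)
    (hmc : Fintype.card E + Fintype.card L = 2 * Fintype.card V)
    (eqv : E ⊕ L ≃ V ⊕ V) :
    ((LGraph.M202 G).submatrix id eqv).det ≠ 0 ↔
      ∃ (ecol : E → Bool) (lcol : L → Bool), ∀ b : Bool,
        G.IsLoopedForestOn (fun e => ecol e = b) (fun l => lcol l = b) :=
  det_M202_ne_zero_iff_two_spanning_looped_forests_general G eqv
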